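/- arXiv:2203.05522 — 3 statements merged into one kernel-verified Lean document; each statement's English description precedes it below -/
import Mathlib

section
/- In a finite strongly-reachable weighted graph where every vertex has an outgoing edge, the limit average weight of any infinite path starting at a vertex x is bounded below by the minimum cycle mean among cycles reachable from x, and bounded above by the maximum cycle mean among cycles reachable from x. -/
/-!
Cutting cycles out of a walk leaves at most `|V|` edges, and every cycle cut out starts at a
vertex reachable from `x`, so its weight lies between `m` and `M` times its length, where `m` and
`M` are the minimal and maximal reachable cycle means. Hence the weight of the first `n` edges of
the path stays within a constant of `m n` and of `M n`, and after dividing by `n` the averages are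
squeezed into `[m, M]` in the limit.
-/

open Finset Filter Topology

section Walks

variable {V : Type*} (E : V → V → Prop) (γ : V → V → ℝ)

def IsWalk (c : ℕ → V) (n : ℕ) : Prop := ∀ i < n, E (c i) (c (i + 1))

def walkWeight (c : ℕ → V) (n : ℕ) : ℝ := ∑ i ∈ range n, γ (c i) (c (i + 1))

def cycleMeans (x : V) : Set ℝ :=
  {m | ∃ (c : ℕ → V) (p : ℕ), 1 ≤ p ∧ c p = c 0 ∧ IsWalk E c p ∧
    Relation.ReflTransGen E x (c 0) ∧ m = walkWeight γ c p / p}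

variable {E γ}

theorem isWalk_add {c : ℕ → V} {a b : ℕ} :
    IsWalk E c (a + b) ↔ IsWalk E c a ∧ IsWalk E (fun k => c (a + k)) b := by
  refine ⟨fun h => ⟨fun i hi => h i (by omega), fun i hi => ?_⟩, fun ⟨ha, hb⟩ i hi => ?_⟩
  · simpa only [← add_assoc] using h (a + i) (by omega)
  · by_cases hia : i < a
    · exact ha i hia
    · obtain ⟨k, rfl⟩ := Nat.exists_eq_add_of_le (not_lt.mp hia)
      simpa only [add_assoc] using hb k (by omega)

theorem IsWalk.congr {c c' : ℕ → V} {n : ℕ} (h : IsWalk E c n) (hcc' : ∀ k ≤ n, c k = c' k) :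
    IsWalk E c' n := fun i hi => hcc' i hi.le ▸ hcc' (i + 1) hi ▸ h i hi

theorem IsWalk.forall_le_of_invariant {P : V → Prop} (hP : ∀ u v, P u → E u v → P v)
    {c : ℕ → V} {n : ℕ} (h : IsWalk E c n) (h0 : P (c 0)) : ∀ k ≤ n, P (c k)
  | 0, _ => h0
  | k + 1, hk => hP _ _ (h.forall_le_of_invariant hP h0 k (by omega)) (h k hk)

theorem walkWeight_add (c : ℕ → V) (a b : ℕ) :
    walkWeight γ c (a + b) = walkWeight γ c a + walkWeight γ (fun k => c (a + k)) b := by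
  simp only [walkWeight, sum_range_add, add_assoc]

theorem walkWeight_congr {c c' : ℕ → V} {n : ℕ} (h : ∀ k ≤ n, c k = c' k) :
    walkWeight γ c n = walkWeight γ c' n :=
  sum_congr rfl fun i hi => by
    rw [mem_range] at hi
    rw [h i hi.le, h (i + 1) hi]

theorem walkWeight_neg (c : ℕ → V) (n : ℕ) :
    walkWeight (fun u v => -γ u v) c n = -walkWeight γ c n := by
  simp only [walkWeight, sum_neg_distrib]

theorem mul_le_walkWeight {β : ℝ} (hβ : ∀ u v, β ≤ γ u v) (c : ℕ → V) (n : ℕ) :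
    β * n ≤ walkWeight γ c n := by
  simpa [walkWeight, mul_comm] using card_nsmul_le_sum (range n) _ β fun i _ => hβ (c i) (c (i + 1))

theorem IsWalk.exists_cut_cycle {σ : ℕ → V} {i d r : ℕ} (h : IsWalk E σ (i + d + r))
    (hcyc : σ (i + d) = σ i) :
    ∃ τ : ℕ → V, τ 0 = σ 0 ∧ IsWalk E τ (i + r) ∧
      walkWeight γ σ (i + d + r) = walkWeight γ τ (i + r) + walkWeight γ (fun k => σ (i + k)) d := by
  set τ : ℕ → V := fun k => if k ≤ i then σ k else σ (k + d)
  have hpre : ∀ k ≤ i, σ k = τ k := fun k hk => (if_pos hk).symm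
  have hsuf : (fun k => τ (i + k)) = fun k => σ (i + d + k) := by
    funext k
    rcases Nat.eq_zero_or_pos k with rfl | hk
    · simp [τ, hcyc]
    · simp only [τ, if_neg (show ¬ i + k ≤ i by omega), add_right_comm]
  obtain ⟨hσid, hσr⟩ := isWalk_add.mp h
  refine ⟨τ, (hpre 0 (Nat.zero_le _)).symm,
    isWalk_add.mpr ⟨(isWalk_add.mp hσid).1.congr hpre, hsuf ▸ hσr⟩, ?_⟩
  rw [walkWeight_add σ (i + d) r, walkWeight_add σ i d, walkWeight_add τ i r, hsuf,
    walkWeight_congr hpre]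
  ring

end Walks

theorem Fintype.exists_add_le_card_apply_eq {V : Type*} [Fintype V] (σ : ℕ → V) :
    ∃ i d, 0 < d ∧ i + d ≤ Fintype.card V ∧ σ (i + d) = σ i := by
  obtain ⟨a, b, hab, heq⟩ :=
    Fintype.exists_ne_map_eq_of_card_lt (fun k : Fin (Fintype.card V + 1) => σ k) (by simp)
  have := a.isLt
  have := b.isLt
  rcases lt_or_gt_of_ne (Fin.val_ne_of_ne hab) with h | h
  · exact ⟨a, b - a, by omega, by omega, by rwa [Nat.add_sub_cancel' h.le, eq_comm]⟩
  · exact ⟨b, a - b, by omega, by omega, by rwa [Nat.add_sub_cancel' h.le]⟩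

section CycleDecomposition

variable {V : Type*} [Fintype V] {E : V → V → Prop} {γ : V → V → ℝ} {P : V → Prop}

theorem mul_sub_le_walkWeight (hP : ∀ u v, P u → E u v → P v) {m β : ℝ}
    (hβ : ∀ u v, β ≤ γ u v)
    (hcyc : ∀ c p, 0 < p → c p = c 0 → IsWalk E c p → P (c 0) → m * p ≤ walkWeight γ c p)
    (n : ℕ) (σ : ℕ → V) (hσ : IsWalk E σ n) (h0 : P (σ 0)) :
    m * n - Fintype.card V * |m - β| ≤ walkWeight γ σ n := by
  induction n using Nat.strong_induction_on generalizing σ with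
  | _ n ih =>
  by_cases hn : n ≤ Fintype.card V
  · have : (n : ℝ) * (m - β) ≤ Fintype.card V * |m - β| :=
      (mul_le_mul_of_nonneg_left (le_abs_self _) n.cast_nonneg).trans
        (mul_le_mul_of_nonneg_right (by exact_mod_cast hn) (abs_nonneg _))
    linarith [mul_le_walkWeight hβ σ n]
  · obtain ⟨i, d, hd, hid, hσid⟩ := Fintype.exists_add_le_card_apply_eq σ
    obtain ⟨r, rfl⟩ : ∃ r, n = i + d + r := ⟨n - (i + d), by omega⟩
    obtain ⟨τ, hτ0, hτ, hW⟩ := hσ.exists_cut_cycle hσid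
    have hτ_bound := ih (i + r) (by omega) τ hτ (hτ0 ▸ h0)
    have hcycle_bound := hcyc (fun k => σ (i + k)) d hd (by simpa using hσid)
      (isWalk_add.mp (isWalk_add.mp hσ).1).2 (hσ.forall_le_of_invariant hP h0 i (by omega))
    rw [hW]
    push_cast at hτ_bound ⊢
    linarith

theorem walkWeight_le_mul_add (hP : ∀ u v, P u → E u v → P v) {M β : ℝ}
    (hβ : ∀ u v, γ u v ≤ β)
    (hcyc : ∀ c p, 0 < p → c p = c 0 → IsWalk E c p → P (c 0) → walkWeight γ c p ≤ M * p)
    (n : ℕ) (σ : ℕ → V) (hσ : IsWalk E σ n) (h0 : P (σ 0)) :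
    walkWeight γ σ n ≤ M * n + Fintype.card V * |M - β| := by
  have := mul_sub_le_walkWeight (γ := fun u v => -γ u v) (m := -M) (β := -β) hP
    (fun u v => neg_le_neg (hβ u v))
    (fun c p hp hcp hc hc0 => by linarith [walkWeight_neg (γ := γ) c p, hcyc c p hp hcp hc hc0])
    n σ hσ h0
  rw [walkWeight_neg, show -M - -β = -(M - β) by ring, abs_neg] at this
  linarith

end CycleDecomposition

section CycleMeans

variable {V : Type*} [Finite V] {E : V → V → Prop} {γ : V → V → ℝ} {x : V}

theorem bddBelow_cycleMeans : BddBelow (cycleMeans E γ x) := by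
  obtain ⟨β, hβ⟩ := Finite.exists_ge fun e : V × V => γ e.1 e.2
  refine ⟨β, ?_⟩
  rintro _ ⟨c, p, hp, -, -, -, rfl⟩
  exact (le_div_iff₀ (by exact_mod_cast hp)).mpr (mul_le_walkWeight (fun u v => hβ (u, v)) c p)

theorem bddAbove_cycleMeans : BddAbove (cycleMeans E γ x) := by
  obtain ⟨β, hβ⟩ := Finite.exists_ge fun e : V × V => -γ e.1 e.2
  refine ⟨-β, ?_⟩
  rintro _ ⟨c, p, hp, -, -, -, rfl⟩
  have := mul_le_walkWeight (fun u v => hβ (u, v)) c p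
  rw [walkWeight_neg] at this
  exact (div_le_iff₀ (by exact_mod_cast hp)).mpr (by linarith)

theorem sInf_cycleMeans_mul_le {c : ℕ → V} {p : ℕ} (hp : 0 < p) (hcp : c p = c 0)
    (hc : IsWalk E c p) (hx : Relation.ReflTransGen E x (c 0)) :
    sInf (cycleMeans E γ x) * p ≤ walkWeight γ c p :=
  (le_div_iff₀ (by exact_mod_cast hp)).mp
    (csInf_le bddBelow_cycleMeans ⟨c, p, hp, hcp, hc, hx, rfl⟩)

theorem walkWeight_le_sSup_cycleMeans_mul {c : ℕ → V} {p : ℕ} (hp : 0 < p) (hcp : c p = c 0)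
    (hc : IsWalk E c p) (hx : Relation.ReflTransGen E x (c 0)) :
    walkWeight γ c p ≤ sSup (cycleMeans E γ x) * p :=
  (div_le_iff₀ (by exact_mod_cast hp)).mp
    (le_csSup bddAbove_cycleMeans ⟨c, p, hp, hcp, hc, hx, rfl⟩)

end CycleMeans

theorem liminf_avg_mem_Icc {s : ℕ → ℝ} {m M C C' : ℝ} (hlow : ∀ n : ℕ, m * n - C ≤ s n)
    (hup : ∀ n : ℕ, s n ≤ M * n + C') :
    liminf (fun n : ℕ => s (n + 1) / (n + 1)) atTop ∈ Set.Icc m M := by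
  have hpos (n : ℕ) : (0 : ℝ) < n + 1 := n.cast_add_one_pos
  have hlo (n : ℕ) : m - C / (n + 1) ≤ s (n + 1) / (n + 1) := by
    rw [le_div_iff₀ (hpos n), sub_mul, div_mul_cancel₀ _ (hpos n).ne']
    exact_mod_cast hlow (n + 1)
  have hhi (n : ℕ) : s (n + 1) / (n + 1) ≤ M + C' / (n + 1) := by
    rw [div_le_iff₀ (hpos n), add_mul, div_mul_cancel₀ _ (hpos n).ne']
    exact_mod_cast hup (n + 1)
  have hdecay (K : ℝ) : Tendsto (fun n : ℕ => K / (n + 1)) atTop (𝓝 0) := by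
    simpa only [mul_one_div, mul_zero] using tendsto_one_div_add_atTop_nhds_zero_nat.const_mul K
  have hlo_lim : Tendsto (fun n : ℕ => m - C / (n + 1)) atTop (𝓝 m) := by
    simpa using (hdecay C).const_sub m
  have hhi_lim : Tendsto (fun n : ℕ => M + C' / (n + 1)) atTop (𝓝 M) := by
    simpa using (hdecay C').const_add M
  constructor
  · calc m = liminf (fun n : ℕ => m - C / (n + 1)) atTop := hlo_lim.liminf_eq.symm
      _ ≤ _ := liminf_le_liminf (.of_forall hlo) hlo_lim.isBoundedUnder_ge
          (hhi_lim.isBoundedUnder_le.mono_le (.of_forall hhi)).isCoboundedUnder_ge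
  · calc _ ≤ liminf (fun n : ℕ => M + C' / (n + 1)) atTop :=
          liminf_le_liminf (.of_forall hhi)
            (hlo_lim.isBoundedUnder_ge.mono_ge (.of_forall hlo))
            hhi_lim.isBoundedUnder_le.isCoboundedUnder_ge
      _ = M := hhi_lim.liminf_eq

theorem limAvg_between_cycle_means_general {V : Type*} [Fintype V]
    (E : V → V → Prop) (γ : V → V → ℝ)
    (x : V) (ρ : ℕ → V) (hρ0 : ρ 0 = x) (hρ : ∀ i, E (ρ i) (ρ (i + 1))) :
    sInf {m : ℝ | ∃ (c : ℕ → V) (p : ℕ), 1 ≤ p ∧ c p = c 0 ∧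
        (∀ i < p, E (c i) (c (i + 1))) ∧ Relation.ReflTransGen E x (c 0) ∧
        m = (∑ i ∈ Finset.range p, γ (c i) (c (i + 1))) / p}
      ≤ Filter.liminf
          (fun n => (∑ i ∈ Finset.range (n + 1), γ (ρ i) (ρ (i + 1))) / (n + 1))
          Filter.atTop ∧
    Filter.liminf
        (fun n => (∑ i ∈ Finset.range (n + 1), γ (ρ i) (ρ (i + 1))) / (n + 1))
        Filter.atTop
      ≤ sSup {m : ℝ | ∃ (c : ℕ → V) (p : ℕ), 1 ≤ p ∧ c p = c 0 ∧
          (∀ i < p, E (c i) (c (i + 1))) ∧ Relation.ReflTransGen E x (c 0) ∧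
          m = (∑ i ∈ Finset.range p, γ (c i) (c (i + 1))) / p} := by
  have hreach_inv : ∀ u v, Relation.ReflTransGen E x u → E u v → Relation.ReflTransGen E x v :=
    fun _ _ => .tail
  have hρ_walk (n : ℕ) : IsWalk E ρ n := fun i _ => hρ i
  have hx : Relation.ReflTransGen E x (ρ 0) := hρ0 ▸ .refl
  obtain ⟨β, hβ⟩ := Finite.exists_ge fun e : V × V => γ e.1 e.2
  obtain ⟨β', hβ'⟩ := Finite.exists_le fun e : V × V => γ e.1 e.2
  -- the sets in the statement unfold to `cycleMeans E γ x`, the sums to `walkWeight γ ρ (n + 1)`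
  exact liminf_avg_mem_Icc (s := walkWeight γ ρ)
    (fun n => mul_sub_le_walkWeight hreach_inv (fun u v => hβ (u, v))
      (fun _ _ hp hcp hc hc0 => sInf_cycleMeans_mul_le hp hcp hc hc0) n ρ (hρ_walk n) hx)
    (fun n => walkWeight_le_mul_add hreach_inv (fun u v => hβ' (u, v))
      (fun _ _ hp hcp hc hc0 => walkWeight_le_sSup_cycleMeans_mul hp hcp hc hc0) n ρ (hρ_walk n) hx)

/-- In a finite weighted graph where every vertex has an outgoing edge, the limit
average weight of any infinite path from `x` is bounded below by the minimum cycle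
mean and above by the maximum cycle mean among cycles reachable from `x`. -/
theorem limAvg_between_cycle_means {V : Type*} [Fintype V]
    (E : V → V → Prop) (γ : V → V → ℝ)
    (hout : ∀ v, ∃ u, E v u)
    (x : V) (ρ : ℕ → V) (hρ0 : ρ 0 = x) (hρ : ∀ i, E (ρ i) (ρ (i + 1))) :
    sInf {m : ℝ | ∃ (c : ℕ → V) (p : ℕ), 1 ≤ p ∧ c p = c 0 ∧
        (∀ i < p, E (c i) (c (i + 1))) ∧ Relation.ReflTransGen E x (c 0) ∧
        m = (∑ i ∈ Finset.range p, γ (c i) (c (i + 1))) / p}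
      ≤ Filter.liminf
          (fun n => (∑ i ∈ Finset.range (n + 1), γ (ρ i) (ρ (i + 1))) / (n + 1))
          Filter.atTop ∧
    Filter.liminf
        (fun n => (∑ i ∈ Finset.range (n + 1), γ (ρ i) (ρ (i + 1))) / (n + 1))
        Filter.atTop
      ≤ sSup {m : ℝ | ∃ (c : ℕ → V) (p : ℕ), 1 ≤ p ∧ c p = c 0 ∧
          (∀ i < p, E (c i) (c (i + 1))) ∧ Relation.ReflTransGen E x (c 0) ∧
          m = (∑ i ∈ Finset.range p, γ (c i) (c (i + 1))) / p} :=
  limAvg_between_cycle_means_general E γ x ρ hρ0 hρ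
end

section
/- The strongest ℓ-complete abstraction is behaviorally inclusive: every external trace (output sequence) of the concrete transition system S is also an external trace of its ℓ-complete abstraction S_ℓ built with the domino rule. -/
/-- `u` is an `ℓ`-long subword of some trace in `L`. -/
def IsSubword {Y : Type*} (L : Set (ℕ → Y)) (ℓ : ℕ) (u : Fin ℓ → Y) : Prop :=
  ∃ t ∈ L, ∃ m : ℕ, ∀ j : Fin ℓ, u j = t (m + j.val)

/-- Domino rule: `u'` is obtained from `u` by dropping the first letter and appending one. -/
def Domino {Y : Type*} {ℓ : ℕ} (u u' : Fin ℓ → Y) : Prop :=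
  ∀ (i : ℕ) (h : i + 1 < ℓ), u ⟨i + 1, h⟩ = u' ⟨i, Nat.lt_of_succ_lt h⟩

/-- A run of the strongest `ℓ`-complete abstraction of `L`. -/
def IsRun {Y : Type*} (L : Set (ℕ → Y)) (ℓ : ℕ) (r : ℕ → Fin ℓ → Y) : Prop :=
  (∀ n, IsSubword L ℓ (r n)) ∧ (∀ n, Domino (r n) (r (n + 1))) ∧
    (∃ t ∈ L, ∀ j : Fin ℓ, r 0 j = t j.val)

section SlidingWindow

variable {Y : Type*}

def slidingWindow (t : ℕ → Y) (ℓ : ℕ) (n : ℕ) : Fin ℓ → Y :=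
  fun j => t (n + j)

theorem isSubword_slidingWindow {L : Set (ℕ → Y)} {t : ℕ → Y} (ht : t ∈ L) (ℓ n : ℕ) :
    IsSubword L ℓ (slidingWindow t ℓ n) :=
  ⟨t, ht, n, fun _ => rfl⟩

theorem domino_slidingWindow (t : ℕ → Y) (ℓ n : ℕ) :
    Domino (slidingWindow t ℓ n) (slidingWindow t ℓ (n + 1)) :=
  fun i _ => congrArg t (Nat.add_right_comm n 1 i).symm

theorem isRun_slidingWindow {L : Set (ℕ → Y)} {t : ℕ → Y} (ht : t ∈ L) (ℓ : ℕ) :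
    IsRun L ℓ (slidingWindow t ℓ) :=
  ⟨isSubword_slidingWindow ht ℓ, domino_slidingWindow t ℓ,
    t, ht, fun j => congrArg t (Nat.zero_add j)⟩

theorem slidingWindow_apply_zero (t : ℕ → Y) {ℓ : ℕ} (hℓ : 0 < ℓ) (n : ℕ) :
    slidingWindow t ℓ n ⟨0, hℓ⟩ = t n :=
  rfl

end SlidingWindow

/-- Behavioural inclusion: every trace of the concrete system is an output trace
of its strongest `ℓ`-complete abstraction. -/
theorem slca_behavioural_inclusion {Y : Type*} (L : Set (ℕ → Y)) (ℓ : ℕ) (hℓ : 0 < ℓ) :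
    ∀ t ∈ L, ∃ r : ℕ → Fin ℓ → Y, IsRun L ℓ r ∧ ∀ n, r n ⟨0, hℓ⟩ = t n :=
  fun t ht => ⟨slidingWindow t ℓ, isRun_slidingWindow ht ℓ, slidingWindow_apply_zero t hℓ⟩
end

section
/- For the ℓ-complete abstraction built by the domino rule, increasing ℓ refines the abstraction: every output trace of S_{ℓ+1} is also an output trace of S_ℓ, i.e., B(S_{ℓ+1}) ⊆ B(S_ℓ). -/
/-- `y` is an infinite output trace of the `ℓ`-complete abstraction. -/
def InBehaviour {Y : Type*} (L : Set (ℕ → Y)) (ℓ : ℕ) (hℓ : 0 < ℓ) (y : ℕ → Y) : Prop :=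
  ∃ r : ℕ → Fin ℓ → Y, IsRun L ℓ r ∧ ∀ n, y n = r n ⟨0, hℓ⟩

/-! Truncating every state of a run to its first `ℓ` letters keeps the subword, domino and
initial-state conditions and does not change the output letter. -/

section

variable {Y : Type*} {L : Set (ℕ → Y)} {ℓ k : ℕ}

theorem IsSubword.castLE {u : Fin k → Y} (hu : IsSubword L k u) (h : ℓ ≤ k) :
    IsSubword L ℓ (u ∘ Fin.castLE h) := by
  obtain ⟨t, htL, m, hm⟩ := hu
  exact ⟨t, htL, m, fun j => hm _⟩

theorem Domino.castLE {u u' : Fin k → Y} (hu : Domino u u') (h : ℓ ≤ k) :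
    Domino (u ∘ Fin.castLE h) (u' ∘ Fin.castLE h) :=
  fun i hi => hu i (by omega)

theorem IsRun.castLE {r : ℕ → Fin k → Y} (hr : IsRun L k r) (h : ℓ ≤ k) :
    IsRun L ℓ (fun n => r n ∘ Fin.castLE h) := by
  obtain ⟨hsub, hdom, t, htL, hinit⟩ := hr
  exact ⟨fun n => (hsub n).castLE h, fun n => (hdom n).castLE h,
    t, htL, fun j => hinit _⟩

theorem InBehaviour.mono {hk : 0 < k} {y : ℕ → Y} (hy : InBehaviour L k hk y) (h : ℓ ≤ k)
    (hℓ : 0 < ℓ) : InBehaviour L ℓ hℓ y := by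
  obtain ⟨r, hr, hyr⟩ := hy
  exact ⟨_, hr.castLE h, hyr⟩

end

/-- Increasing `ℓ` refines the abstraction: `B(S_{ℓ+1}) ⊆ B(S_ℓ)`. -/
theorem slca_refinement {Y : Type*} (L : Set (ℕ → Y)) (ℓ : ℕ) (hℓ : 0 < ℓ) :
    ∀ y : ℕ → Y, InBehaviour L (ℓ + 1) (Nat.succ_pos ℓ) y → InBehaviour L ℓ hℓ y :=
  fun _ hy => hy.mono ℓ.le_succ hℓ
end
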